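/- arXiv:2212.04379 — 2 statements merged into one kernel-verified Lean document; each statement's English description precedes it below -/
import Mathlib

section
/- (Linking preserves the motivic generating series.) Let C ∈ Mat_{N×N}(ℤ) be symmetric and let a ≠ b be two indices in {1,…,N}. Define the symmetric matrix C' ∈ Mat_{(N+1)×(N+1)}(ℤ), with new index n = N+1, by: C'_{ab} = C'_{ba} = C_{ab} + 1; C'_{nn} = C_{aa} + 2C_{ab} + C_{bb}; C'_{in} = C'_{ni} = C_{ai} + C_{bi} for i ≤ N; and C'_{ij} = C_{ij} for all other i,j ≤ N. Then for every d ∈ ℕ^N: (−q)^{dᵀCd}/∏_{i=1}^{N}(q²;q²)_{d_i} = Σ over all e ∈ ℕ^{N+1} satisfying e_i + (δ_{ia}+δ_{ib})·e_n = d_i for every i ≤ N, of (−q)^{eᵀC'e}/∏_{i=1}^{N+1}(q²;q²)_{e_i} (a finite sum). Equivalently, P_C(x_1,…,x_N) = P_{C'}(x_1,…,x_N,x_n) after the substitution x_n = x_a x_b. -/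
noncomputable section

/-- The base field `K = ℚ(q)`. -/
abbrev K : Type := RatFunc ℚ

/-- The variable `q` of `K = ℚ(q)`. -/
def qq : K := RatFunc.X

/-- The finite q-Pochhammer symbol `(α; q²)_n = ∏_{k=0}^{n-1} (1 - α q^{2k})`. -/
def qPoch (α : K) (n : ℕ) : K := ∏ k ∈ Finset.range n, (1 - α * qq ^ (2 * k))

/-- The quadratic form `dᵀ C d` of an integer matrix on a dimension vector. -/
def quadForm {N : ℕ} (C : Matrix (Fin N) (Fin N) ℤ) (d : Fin N → ℕ) : ℤ :=
  ∑ i, ∑ j, C i j * (d i : ℤ) * (d j : ℤ)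

/-- The coefficient of `x^d` in the motivic generating series of the extended
symmetric quiver with adjacency matrix `C`: `(-q)^{dᵀCd} / ∏ᵢ (q²;q²)_{dᵢ}`. -/
def Pcoeff {N : ℕ} (C : Matrix (Fin N) (Fin N) ℤ) (d : Fin N → ℕ) : K :=
  (-qq) ^ quadForm C d / ∏ i, qPoch (qq ^ 2) (d i)


/-!
Every admissible `e` is determined by `m = e_n ≤ min(d_a, d_b)`, namely `e_i = d_i - (δ_{ia}+δ_{ib}) m`.
Writing `d = e|_N + m(δ_a + δ_b)` and expanding, the new row and column of `C'` reproduce exactly the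
cross terms and the `m²` term of `dᵀCd`, while the linking `+1` at `(a,b)` contributes `2 e_a e_b`;
hence `eᵀC'e = dᵀCd + 2(d_a - m)(d_b - m)`. After dividing by `P_C`'s coefficient the claim becomes,
with `t = q²`, `r = d_a`, `s = d_b`, the identity `∑_m t^{(r-m)(s-m)} [r m]_t [s m]_t (t;t)_m = 1`.
It follows by induction on `r`: the q-Pascal rule and `[s, m+1]_t (t;t)_{m+1} = [s, m]_t (t;t)_m (1 - t^{s-m})`
make the sum for `r + 1` telescope to the sum for `r`.
-/

open Finset

section QAnalogues

variable {F : Type*} [Field F] (t : F)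

/-- `(t;t)_n`. -/
def qPochhammer (n : ℕ) : F := ∏ k ∈ range n, (1 - t ^ (k + 1))

/-- The Gaussian binomial coefficient `[n k]_t`, with junk value `0` for `k > n`. -/
def qBinom (n k : ℕ) : F :=
  if k ≤ n then qPochhammer t n / (qPochhammer t k * qPochhammer t (n - k)) else 0

def linkingWeight (r s k : ℕ) : F :=
  t ^ ((r - k) * (s - k)) * (qBinom t r k * qBinom t s k * qPochhammer t k)

lemma qPochhammer_zero : qPochhammer t 0 = 1 := prod_range_zero _

lemma qPochhammer_succ (n : ℕ) :
    qPochhammer t (n + 1) = qPochhammer t n * (1 - t ^ (n + 1)) :=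
  prod_range_succ _ _

lemma qBinom_of_lt {n k : ℕ} (h : n < k) : qBinom t n k = 0 := if_neg h.not_ge

lemma qBinom_eq_of_le {n k : ℕ} (h : k ≤ n) :
    qBinom t n k = qPochhammer t n / (qPochhammer t k * qPochhammer t (n - k)) := if_pos h

variable {t}

lemma one_sub_pow_succ_ne_zero (ht : ¬IsOfFinOrder t) (n : ℕ) : 1 - t ^ (n + 1) ≠ 0 :=
  sub_ne_zero.2 fun h => ht (isOfFinOrder_iff_pow_eq_one.2 ⟨n + 1, n.succ_pos, h.symm⟩)

lemma qPochhammer_ne_zero (ht : ¬IsOfFinOrder t) (n : ℕ) : qPochhammer t n ≠ 0 :=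
  prod_ne_zero_iff.2 fun k _ => one_sub_pow_succ_ne_zero ht k

lemma qBinom_zero_right (ht : ¬IsOfFinOrder t) (n : ℕ) : qBinom t n 0 = 1 := by
  simp [qBinom, qPochhammer_zero, qPochhammer_ne_zero ht]

lemma qBinom_self (ht : ¬IsOfFinOrder t) (n : ℕ) : qBinom t n n = 1 := by
  simp [qBinom, qPochhammer_zero, qPochhammer_ne_zero ht]

lemma qBinom_succ_mul_qPochhammer_succ (ht : ¬IsOfFinOrder t) (n k : ℕ) :
    qBinom t n (k + 1) * qPochhammer t (k + 1) =
      qBinom t n k * qPochhammer t k * (1 - t ^ (n - k)) := by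
  rcases lt_or_ge k n with h | h
  · obtain ⟨j, rfl⟩ := Nat.exists_eq_add_of_lt h
    rw [qBinom_eq_of_le t h.le, qBinom_eq_of_le t h, show k + j + 1 - k = j + 1 by omega,
      show k + j + 1 - (k + 1) = j by omega, qPochhammer_succ t j, qPochhammer_succ t k]
    have := qPochhammer_ne_zero ht j
    have := qPochhammer_ne_zero ht k
    have := one_sub_pow_succ_ne_zero ht j
    have := one_sub_pow_succ_ne_zero ht k
    field_simp
  · rw [qBinom_of_lt t (Nat.lt_succ_of_le h), Nat.sub_eq_zero_of_le h]
    simp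

lemma qBinom_succ_succ (ht : ¬IsOfFinOrder t) {n k : ℕ} (h : k ≤ n) :
    qBinom t (n + 1) (k + 1) = qBinom t n (k + 1) + t ^ (n - k) * qBinom t n k := by
  obtain ⟨j, rfl⟩ := Nat.exists_eq_add_of_le h
  rcases j with _ | j
  · simp [qBinom_of_lt t (Nat.lt_succ_self k), qBinom_self ht]
  rw [qBinom_eq_of_le t (by omega), qBinom_eq_of_le t (by omega), qBinom_eq_of_le t h,
    show k + (j + 1) + 1 - (k + 1) = j + 1 by omega, show k + (j + 1) - (k + 1) = j by omega,
    show k + (j + 1) - k = j + 1 by omega, qPochhammer_succ t (k + (j + 1)),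
    qPochhammer_succ t j, qPochhammer_succ t k]
  have := qPochhammer_ne_zero ht j
  have := qPochhammer_ne_zero ht k
  have := qPochhammer_ne_zero ht (k + (j + 1))
  have := one_sub_pow_succ_ne_zero ht j
  have := one_sub_pow_succ_ne_zero ht k
  field_simp
  ring

lemma linkingWeight_succ_succ (ht : ¬IsOfFinOrder t) {r k : ℕ} (s : ℕ) (hk : k ≤ r) :
    linkingWeight t (r + 1) s (k + 1) =
      t ^ (s - (k + 1)) * linkingWeight t r s (k + 1) - t ^ (s - k) * linkingWeight t r s k +
        linkingWeight t r s k := by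
  rcases le_or_gt s k with hs | hs
  · simp [linkingWeight, qBinom_of_lt t (Nat.lt_succ_of_le hs), Nat.sub_eq_zero_of_le hs]
  obtain ⟨j, rfl⟩ := Nat.exists_eq_add_of_lt hs
  have habsorb := qBinom_succ_mul_qPochhammer_succ ht (k + j + 1) k
  rw [show k + j + 1 - k = j + 1 by omega] at habsorb
  obtain ⟨i, rfl⟩ := Nat.exists_eq_add_of_le hk
  simp only [linkingWeight, qBinom_succ_succ ht hk, show k + j + 1 - (k + 1) = j by omega,
    show k + j + 1 - k = j + 1 by omega, show k + i + 1 - (k + 1) = i by omega,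
    show k + i - k = i by omega]
  rcases i with _ | i
  · simp only [Nat.add_zero, qBinom_of_lt t (Nat.lt_succ_self k), qBinom_self ht]
    linear_combination habsorb
  · rw [show k + (i + 1) - (k + 1) = i by omega]
    linear_combination (t ^ ((i + 1) * j) * t ^ (i + 1) * qBinom t (k + (i + 1)) k) * habsorb

lemma sum_range_linkingWeight (ht : ¬IsOfFinOrder t) (r s : ℕ) :
    ∑ k ∈ range (r + 1), linkingWeight t r s k = 1 := by
  induction r with
  | zero => simp [linkingWeight, qBinom_zero_right ht, qPochhammer_zero]
  | succ r ih =>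
    rw [sum_range_succ', sum_congr rfl fun k hk => linkingWeight_succ_succ ht s
      (Nat.lt_succ_iff.1 (mem_range.1 hk)), sum_add_distrib,
      sum_range_sub (fun k => t ^ (s - k) * linkingWeight t r s k), ih]
    simp [linkingWeight, qBinom_of_lt t (Nat.lt_succ_self r), qBinom_zero_right ht,
      qPochhammer_zero, ← pow_add]
    ring

lemma sum_range_min_linkingWeight (ht : ¬IsOfFinOrder t) (r s : ℕ) :
    ∑ k ∈ range (min r s + 1), linkingWeight t r s k = 1 := by
  rw [← sum_range_linkingWeight ht r s]
  refine sum_subset (range_subset_range.2 (by omega)) fun k hkr hk => ?_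
  simp only [mem_range] at hkr hk
  simp [linkingWeight, qBinom_of_lt t (show s < k by omega)]

lemma linkingWeight_eq_div (ht : ¬IsOfFinOrder t) {r s k : ℕ} (hr : k ≤ r) (hs : k ≤ s) :
    linkingWeight t r s k = t ^ ((r - k) * (s - k)) * (qPochhammer t r * qPochhammer t s) /
      (qPochhammer t k * qPochhammer t (r - k) * qPochhammer t (s - k)) := by
  have := qPochhammer_ne_zero ht k
  have := qPochhammer_ne_zero ht (r - k)
  have := qPochhammer_ne_zero ht (s - k)
  rw [linkingWeight, qBinom_eq_of_le t hr, qBinom_eq_of_le t hs]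
  field_simp

end QAnalogues

lemma prod_mul_eq_prod_mul_of_eqOn_compl_pair {ι M : Type*} [Fintype ι] [DecidableEq ι]
    [CommMonoid M] {a b : ι} (hab : a ≠ b) {g h : ι → M} (hgh : ∀ i, i ≠ a → i ≠ b → g i = h i) :
    (∏ i, g i) * (h a * h b) = (∏ i, h i) * (g a * g b) := by
  have hsplit : ∀ f : ι → M, ∏ i, f i = (∏ i ∈ univ \ {a, b}, f i) * (f a * f b) := fun f => by
    rw [← prod_pair hab, prod_sdiff (subset_univ _)]
  have hrest : ∏ i ∈ univ \ {a, b}, g i = ∏ i ∈ univ \ {a, b}, h i :=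
    prod_congr rfl fun i hi => by
      simp only [mem_sdiff, mem_univ, mem_insert, mem_singleton, true_and, not_or] at hi
      exact hgh i hi.1 hi.2
  rw [hsplit g, hsplit h, hrest, mul_right_comm]

section Linking

variable {N : ℕ}

def linkMult (a b i : Fin N) : ℕ := (if i = a then 1 else 0) + (if i = b then 1 else 0)

structure IsLinking (C : Matrix (Fin N) (Fin N) ℤ) (a b : Fin N)
    (C' : Matrix (Fin (N + 1)) (Fin (N + 1)) ℤ) : Prop where
  apply_left_right : C' a.castSucc b.castSucc = C a b + 1
  apply_right_left : C' b.castSucc a.castSucc = C a b + 1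
  apply_last_last : C' (Fin.last N) (Fin.last N) = C a a + 2 * C a b + C b b
  apply_castSucc_last : ∀ i : Fin N, C' i.castSucc (Fin.last N) = C a i + C b i
  apply_last_castSucc : ∀ i : Fin N, C' (Fin.last N) i.castSucc = C a i + C b i
  apply_castSucc_castSucc : ∀ i j : Fin N, ¬(i = a ∧ j = b) → ¬(i = b ∧ j = a) →
    C' i.castSucc j.castSucc = C i j

variable {a b : Fin N}

lemma sum_linkMult_mul (a b : Fin N) (g : Fin N → ℤ) :
    ∑ i, (linkMult a b i : ℤ) * g i = g a + g b := by
  simp [linkMult, add_mul, sum_add_distrib]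

lemma quadForm_snoc_of_isLinking {C : Matrix (Fin N) (Fin N) ℤ} (hC : C.IsSymm) (hab : a ≠ b)
    {C' : Matrix (Fin (N + 1)) (Fin (N + 1)) ℤ} (hC' : IsLinking C a b C') (e : Fin N → ℕ)
    (m : ℕ) :
    quadForm C' (Fin.snoc e m) =
      quadForm C (fun i => e i + linkMult a b i * m) + 2 * (e a : ℤ) * (e b : ℤ) := by
  have hCs : ∀ i j, C j i = C i j := fun i j => congrFun (congrFun hC i) j
  have hC'ij : ∀ i j, C' i.castSucc j.castSucc =
      C i j + ((if i = a then 1 else 0) * (if j = b then 1 else 0) +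
        (if i = b then 1 else 0) * (if j = a then 1 else 0)) := by
    have := hC'.apply_left_right
    have := hC'.apply_right_left
    have := hC'.apply_castSucc_castSucc
    intro i j
    by_cases hia : i = a <;> by_cases hib : i = b <;> by_cases hja : j = a <;>
      by_cases hjb : j = b <;> subst_vars <;> simp_all
  have hexpand : ∀ i j, C i j * ((e i : ℤ) + linkMult a b i * m) * (e j + linkMult a b j * m) =
      C i j * e i * e j + m * (linkMult a b j * (C j i * e i)) +
        m * (linkMult a b i * (C i j * e j)) +
        m ^ 2 * (linkMult a b i * (linkMult a b j * C i j)) := by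
    intro i j; rw [hCs i j]; ring
  simp only [quadForm, Fin.sum_univ_castSucc, Fin.snoc_castSucc, Fin.snoc_last, hC'ij,
    hC'.apply_castSucc_last, hC'.apply_last_castSucc, hC'.apply_last_last, Nat.cast_add,
    Nat.cast_mul, hexpand, sum_add_distrib, ← mul_sum, sum_linkMult_mul]
  simp only [add_mul, ite_mul, mul_ite, one_mul, zero_mul, mul_zero, sum_add_distrib, sum_ite_eq',
    mem_univ, if_true]
  simp only [mul_right_comm _ (m : ℤ) (e _ : ℤ), ← sum_mul]
  rw [hCs a b]
  ring

lemma linkMult_left (hab : a ≠ b) : linkMult a b a = 1 := by simp [linkMult, hab]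

lemma linkMult_right (hab : a ≠ b) : linkMult a b b = 1 := by simp [linkMult, hab.symm]

lemma linkMult_mul_le (hab : a ≠ b) {d : Fin N → ℕ} {m : ℕ} (hm : m ≤ min (d a) (d b))
    (i : Fin N) : linkMult a b i * m ≤ d i := by
  by_cases hia : i = a
  · subst hia; rw [linkMult_left hab]; omega
  by_cases hib : i = b
  · subst hib; rw [linkMult_right hab]; omega
  simp [linkMult, hia, hib]

variable (a b) in
def linkedVector (d : Fin N → ℕ) (m : ℕ) : Fin (N + 1) → ℕ :=
  Fin.snoc (fun i => d i - linkMult a b i * m) m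

lemma linkedVector_spec (hab : a ≠ b) {d : Fin N → ℕ} {m : ℕ} (hm : m ≤ min (d a) (d b))
    (i : Fin N) :
    linkedVector a b d m i.castSucc + linkMult a b i * linkedVector a b d m (Fin.last N) = d i := by
  simp only [linkedVector, Fin.snoc_castSucc, Fin.snoc_last]
  have := linkMult_mul_le hab hm i
  omega

lemma eq_linkedVector_of_spec (hab : a ≠ b) {d : Fin N → ℕ} {e : Fin (N + 1) → ℕ}
    (h : ∀ i, e i.castSucc + linkMult a b i * e (Fin.last N) = d i) :
    e (Fin.last N) ≤ min (d a) (d b) ∧ e = linkedVector a b d (e (Fin.last N)) := by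
  have ha := h a
  have hb := h b
  rw [linkMult_left hab] at ha
  rw [linkMult_right hab] at hb
  refine ⟨by omega, funext fun j => Fin.lastCases ?_ (fun i => ?_) j⟩
  · simp [linkedVector]
  · have := h i
    simp only [linkedVector, Fin.snoc_castSucc]
    omega

lemma finsum_ite_linkedVector {M : Type*} [AddCommMonoid M] (hab : a ≠ b) (d : Fin N → ℕ)
    (g : (Fin (N + 1) → ℕ) → M) :
    ∑ᶠ e : Fin (N + 1) → ℕ,
        (if ∀ i, e i.castSucc + linkMult a b i * e (Fin.last N) = d i then g e else 0) =
      ∑ m ∈ range (min (d a) (d b) + 1), g (linkedVector a b d m) := by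
  have hinj : Set.InjOn (linkedVector a b d) ↑(range (min (d a) (d b) + 1)) :=
    fun m _ m' _ h => by simpa [linkedVector] using congrFun h (Fin.last N)
  rw [finsum_eq_sum_of_support_subset _ (s := (range _).image (linkedVector a b d)), sum_image hinj]
  · exact sum_congr rfl fun m hm =>
      if_pos (linkedVector_spec hab (Nat.lt_succ_iff.1 (mem_range.1 hm)))
  · intro e he
    have hspec : ∀ i, e i.castSucc + linkMult a b i * e (Fin.last N) = d i := by
      by_contra h
      exact he (if_neg h)
    obtain ⟨hm, he⟩ := eq_linkedVector_of_spec hab hspec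
    exact mem_image.2 ⟨_, mem_range.2 (Nat.lt_succ_of_le hm), he.symm⟩

end Linking

lemma qq_pow_ne_one {n : ℕ} (hn : n ≠ 0) : qq ^ n ≠ 1 := by
  intro h
  have hX : (Polynomial.X ^ n : Polynomial ℚ) = 1 :=
    RatFunc.algebraMap_injective ℚ (by simpa [qq, RatFunc.algebraMap_X] using h)
  simpa [hn] using congrArg Polynomial.natDegree hX

lemma not_isOfFinOrder_qq_sq : ¬IsOfFinOrder (qq ^ 2) := by
  rw [isOfFinOrder_iff_pow_eq_one]
  rintro ⟨n, hn, h⟩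
  exact qq_pow_ne_one (by omega) ((pow_mul qq 2 n).trans h)

lemma qPoch_qq_sq (n : ℕ) : qPoch (qq ^ 2) n = qPochhammer (qq ^ 2) n :=
  prod_congr rfl fun k _ => by ring

lemma summand_linkedVector {N : ℕ} {C : Matrix (Fin N) (Fin N) ℤ} (hC : C.IsSymm) {a b : Fin N}
    (hab : a ≠ b) {C' : Matrix (Fin (N + 1)) (Fin (N + 1)) ℤ} (hC' : IsLinking C a b C')
    (d : Fin N → ℕ) {m : ℕ} (hm : m ≤ min (d a) (d b)) :
    (-qq) ^ quadForm C' (linkedVector a b d m) / ∏ i, qPoch (qq ^ 2) (linkedVector a b d m i) =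
      Pcoeff C d * linkingWeight (qq ^ 2) (d a) (d b) m := by
  have hquad := quadForm_snoc_of_isLinking hC hab hC' (fun i => d i - linkMult a b i * m) m
  simp only [Nat.sub_add_cancel (linkMult_mul_le hab hm _), linkMult_left hab,
    linkMult_right hab, one_mul] at hquad
  have hsign : (-qq) ^ (2 * ((d a - m : ℕ) : ℤ) * ((d b - m : ℕ) : ℤ)) =
      (qq ^ 2) ^ ((d a - m) * (d b - m)) := by
    rw [mul_assoc, zpow_mul, zpow_ofNat, neg_sq, ← Nat.cast_mul, zpow_natCast]
  have hprod := prod_mul_eq_prod_mul_of_eqOn_compl_pair hab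
    (g := fun i => qPochhammer (qq ^ 2) (d i - linkMult a b i * m))
    (h := fun i => qPochhammer (qq ^ 2) (d i)) fun i hia hib => by simp [linkMult, hia, hib]
  simp only [linkMult_left hab, linkMult_right hab, one_mul] at hprod
  have hf := qPochhammer_ne_zero not_isOfFinOrder_qq_sq
  have := hf m
  have := hf (d a - m)
  have := hf (d b - m)
  have : ∏ i, qPochhammer (qq ^ 2) (d i) ≠ 0 := prod_ne_zero_iff.2 fun i _ => hf _
  have : ∏ i, qPochhammer (qq ^ 2) (d i - linkMult a b i * m) ≠ 0 :=
    prod_ne_zero_iff.2 fun i _ => hf _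
  rw [Pcoeff, linkingWeight_eq_div not_isOfFinOrder_qq_sq (hm.trans (min_le_left _ _))
    (hm.trans (min_le_right _ _))]
  simp only [qPoch_qq_sq, Fin.prod_univ_castSucc, linkedVector, Fin.snoc_castSucc, Fin.snoc_last]
  rw [hquad, zpow_add₀ (neg_ne_zero.2 RatFunc.X_ne_zero), hsign]
  field_simp
  linear_combination (-((-qq) ^ quadForm C d * (qq ^ 2) ^ ((d a - m) * (d b - m)))) * hprod

/-- **Linking preserves the motivic generating series (Theorem 2.4, Ekholm–Kucharski–Longhi).**
Linking the nodes `a ≠ b` of `C` yields the quiver `C'` on `N+1` nodes described below,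
and `P_C(x_1,…,x_N) = P_{C'}(x_1,…,x_N,x_n)` after the substitution `x_n = x_a x_b`,
expressed coefficientwise. -/
theorem statement3 (N : ℕ) (C : Matrix (Fin N) (Fin N) ℤ) (hC : C.IsSymm)
    (a b : Fin N) (hab : a ≠ b)
    (C' : Matrix (Fin (N + 1)) (Fin (N + 1)) ℤ)
    (hC'ab : C' a.castSucc b.castSucc = C a b + 1)
    (hC'ba : C' b.castSucc a.castSucc = C a b + 1)
    (hC'nn : C' (Fin.last N) (Fin.last N) = C a a + 2 * C a b + C b b)
    (hC'in : ∀ i : Fin N, C' i.castSucc (Fin.last N) = C a i + C b i)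
    (hC'ni : ∀ i : Fin N, C' (Fin.last N) i.castSucc = C a i + C b i)
    (hC'ij : ∀ i j : Fin N, ¬(i = a ∧ j = b) → ¬(i = b ∧ j = a) →
      C' i.castSucc j.castSucc = C i j) :
    ∀ d : Fin N → ℕ,
      Pcoeff C d =
        ∑ᶠ e : Fin (N + 1) → ℕ,
          if ∀ i : Fin N,
              e i.castSucc + ((if i = a then 1 else 0) + (if i = b then 1 else 0)) *
                e (Fin.last N) = d i then
            (-qq) ^ quadForm C' e / ∏ i, qPoch (qq ^ 2) (e i)
          else 0 := by
  intro d
  have hC' : IsLinking C a b C' := ⟨hC'ab, hC'ba, hC'nn, hC'in, hC'ni, hC'ij⟩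
  calc Pcoeff C d
      = ∑ m ∈ range (min (d a) (d b) + 1), Pcoeff C d * linkingWeight (qq ^ 2) (d a) (d b) m := by
        rw [← mul_sum, sum_range_min_linkingWeight not_isOfFinOrder_qq_sq, mul_one]
    _ = ∑ m ∈ range (min (d a) (d b) + 1), (-qq) ^ quadForm C' (linkedVector a b d m) /
          ∏ i, qPoch (qq ^ 2) (linkedVector a b d m i) :=
        sum_congr rfl fun m hm =>
          (summand_linkedVector hC hab hC' d (Nat.lt_succ_iff.1 (mem_range.1 hm))).symm
    _ = _ := (finsum_ite_linkedVector hab d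
          fun e => (-qq) ^ quadForm C' e / ∏ i, qPoch (qq ^ 2) (e i)).symm
end
end

section
/- (Coefficient recursion for the (−m)-loop ratio series.) Fix m ∈ ℕ. In K[[x]] with K = ℚ(q), let A = Σ_{d≥0} (−q)^{−m d²} q^{(m+1)d} x^d/(q²;q²)_d and B = Σ_{d≥0} (−q)^{−m d²} q^{(m+3)d} x^d/(q²;q²)_d; A is a unit and Y = B·A^{−1} = Σ_{n≥0} Y_n x^n with Y_n ∈ K. Then Y_0 = 1, Y_1 = (−1)^{m+1} q, and for every n ≥ 2: Y_n = −Σ_{a+b=n, a≥1, b≥1} Y_a · Σ_{k_1+…+k_m=b, k_i ∈ ℕ} ∏_{i=1}^{m} q^{−2 i k_i} Y_{k_i}. -/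
/-!
Write `A_e(x) = P_{-m}(qᵉ x)`, so that `A = A_{m+1}` and `B = A_{m+3} = A(q² x)`. Then
`Y(x) A(x) = A(q² x)`, which telescopes to `A(x) = Z(x) A(q^{-2m} x)` with
`Z(x) = ∏_{i=1}^m Y(q^{-2i} x)`. Comparing coefficients, using
`(q²;q²)_{d+1} = (q²;q²)_d (1 - q^{2d+2})`, gives the functional equation
`B(x) = A(x) + (-1)^{m+1} q x A(q^{-2m} x)`. Dividing `(Y - 1) A = B - A` by `A(q^{-2m} x)`
yields `(Y - 1) Z = (-1)^{m+1} q x`, and the recursion is the coefficient of `xⁿ` of this identity.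
-/

noncomputable section

namespace PowerSeries

section CommSemiring

variable {R : Type*} [CommSemiring R]

theorem coeff_prod_fin {m : ℕ} (f : Fin m → R⟦X⟧) (n : ℕ) :
    coeff n (∏ i, f i) = ∑ k ∈ Finset.Nat.antidiagonalTuple m n, ∏ i, coeff (k i) (f i) := by
  rw [coeff_prod]
  refine Finset.sum_nbij' (⇑) Finsupp.equivFunOnFinite.symm ?_ ?_
    (fun l _ => Finsupp.equivFunOnFinite.symm_apply_apply l) (fun _ _ => rfl) (fun _ _ => rfl)
  · intro l hl
    simpa [Finset.Nat.mem_antidiagonalTuple] using (Finset.mem_finsuppAntidiag.1 hl).1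
  · intro k hk
    simpa [Finset.Nat.mem_antidiagonalTuple] using hk

theorem prod_range_rescale_mul_rescale_eq {c t : R} (hct : c * t = 1) {Y A : R⟦X⟧}
    (h : Y * A = rescale c A) (j : ℕ) :
    (∏ i ∈ Finset.range j, rescale (t ^ (i + 1)) Y) * rescale (t ^ j) A = A := by
  induction j with
  | zero => simp
  | succ j ih =>
    have step : rescale (t ^ (j + 1)) Y * rescale (t ^ (j + 1)) A = rescale (t ^ j) A := by
      rw [← map_mul, h, rescale_rescale, pow_succ, ← mul_assoc, mul_comm c, mul_assoc, hct,
        mul_one]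
    rw [Finset.prod_range_succ, mul_assoc, step, ih]

end CommSemiring

section CommRing

variable {R : Type*} [CommRing R]

theorem coeff_sub_one_mul {Y Z : R⟦X⟧} (hY : coeff 0 Y = 1) (hZ : coeff 0 Z = 1)
    {n : ℕ} (hn : 1 ≤ n) :
    coeff n ((Y - 1) * Z) = coeff n Y +
      ∑ p ∈ (Finset.HasAntidiagonal.antidiagonal n).filter (fun p => 1 ≤ p.1 ∧ 1 ≤ p.2),
        coeff p.1 Y * coeff p.2 Z := by
  have edges : (Finset.HasAntidiagonal.antidiagonal n).filter (fun p => ¬(1 ≤ p.1 ∧ 1 ≤ p.2))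
      = {(0, n), (n, 0)} := by
    ext ⟨a, b⟩
    simp only [Finset.mem_filter, Finset.HasAntidiagonal.mem_antidiagonal, Finset.mem_insert,
      Finset.mem_singleton, Prod.mk.injEq]
    omega
  rw [sub_mul, one_mul, map_sub, coeff_mul,
    ← Finset.sum_filter_add_sum_filter_not _ (fun p => 1 ≤ p.1 ∧ 1 ≤ p.2), edges,
    Finset.sum_pair (by simp; omega), hY, hZ]
  ring

theorem coeff_of_sub_one_mul_eq_C_mul_X {Y Z : R⟦X⟧} {a : R} (hY : coeff 0 Y = 1)
    (hZ : coeff 0 Z = 1) (h : (Y - 1) * Z = C a * X) :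
    coeff 1 Y = a ∧ ∀ n, 2 ≤ n → coeff n Y =
      -∑ p ∈ (Finset.HasAntidiagonal.antidiagonal n).filter (fun p => 1 ≤ p.1 ∧ 1 ≤ p.2),
        coeff p.1 Y * coeff p.2 Z := by
  have hcoeff (n : ℕ) (hn : 1 ≤ n) := coeff_sub_one_mul hY hZ hn
  simp only [h, coeff_C_mul, coeff_X] at hcoeff
  have no_inner_one :
      (Finset.HasAntidiagonal.antidiagonal 1).filter (fun p => 1 ≤ p.1 ∧ 1 ≤ p.2) = ∅ := by
    decide
  refine ⟨by simpa [no_inner_one, eq_comm] using hcoeff 1 le_rfl, fun n hn => ?_⟩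
  have hn' := hcoeff n (by omega)
  rw [if_neg (by omega), mul_zero] at hn'
  linear_combination -hn'

end CommRing

end PowerSeries

open PowerSeries

lemma qq_ne_zero : qq ≠ 0 := RatFunc.X_ne_zero

lemma one_sub_qq_pow_ne_zero {k : ℕ} (hk : k ≠ 0) : (1 : K) - qq ^ k ≠ 0 := by
  rw [sub_ne_zero, ne_comm, qq, ← RatFunc.algebraMap_X, ← map_pow,
    ← map_one (algebraMap (Polynomial ℚ) K), (IsFractionRing.injective (Polynomial ℚ) K).ne_iff]
  intro h
  simpa [hk] using congrArg (Polynomial.eval 0) h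

lemma qPoch_ne_zero (d : ℕ) : qPoch (qq ^ 2) d ≠ 0 := by
  refine Finset.prod_ne_zero_iff.2 fun k _ => ?_
  rw [← pow_add]
  exact one_sub_qq_pow_ne_zero (by omega)

lemma qPoch_succ (d : ℕ) :
    qPoch (qq ^ 2) (d + 1) = qPoch (qq ^ 2) d * (1 - qq ^ (2 * d + 2)) := by
  rw [qPoch, Finset.prod_range_succ, qPoch, ← pow_add]
  ring_nf

/-- `P_{-m}(qᵉ x)`, the `(-m)`-loop quiver series evaluated at `qᵉ x`. -/
def negLoopSeries (m e : ℕ) : K⟦X⟧ :=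
  mk fun d : ℕ => (-qq) ^ (-(m : ℤ) * (d : ℤ) ^ 2) * qq ^ (e * d) / qPoch (qq ^ 2) d

lemma constantCoeff_negLoopSeries (m e : ℕ) : constantCoeff (negLoopSeries m e) = 1 := by
  simp [negLoopSeries, qPoch]

lemma rescale_negLoopSeries (m e c : ℕ) :
    rescale (qq ^ c) (negLoopSeries m e) = negLoopSeries m (e + c) := by
  ext d
  simp only [negLoopSeries, coeff_rescale, coeff_mk, ← pow_mul, add_mul]
  ring

lemma neg_qq_zpow_succ_sq (m d : ℕ) :
    (-qq) ^ (-(m : ℤ) * ((d + 1 : ℕ) : ℤ) ^ 2)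
      = (-qq) ^ (-(m : ℤ) * (d : ℤ) ^ 2) * ((-1) ^ m * (qq ^ (m * (2 * d + 1)))⁻¹) := by
  have hodd : (-qq) ^ (m * (2 * d + 1)) = (-1) ^ m * qq ^ (m * (2 * d + 1)) := by
    rw [mul_comm m, pow_mul, (odd_two_mul_add_one d).neg_pow, neg_pow, ← pow_mul]
  have hsign : (-1 : K) ^ m = ((-1) ^ m)⁻¹ := by rw [← inv_pow, inv_neg_one]
  rw [hsign, ← mul_inv, ← hodd, ← zpow_natCast, ← zpow_neg,
    ← zpow_add₀ (neg_ne_zero.2 qq_ne_zero)]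
  congr 1
  push_cast
  ring

lemma negLoopSeries_functional_equation (m : ℕ) :
    negLoopSeries m (m + 3) = negLoopSeries m (m + 1) +
      C ((-1) ^ (m + 1) * qq) * X * rescale ((qq ^ 2)⁻¹ ^ m) (negLoopSeries m (m + 1)) := by
  ext (_ | d)
  · simp [negLoopSeries]
  rw [map_add, mul_assoc, coeff_C_mul, coeff_succ_X_mul, coeff_rescale]
  simp only [negLoopSeries, coeff_mk, neg_qq_zpow_succ_sq, qPoch_succ, ← pow_mul, inv_pow]
  have := one_sub_qq_pow_ne_zero (k := 2 * d + 2) (by omega)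
  field_simp [qq_ne_zero, qPoch_ne_zero d]
  ring

def ratioSeries (m : ℕ) : K⟦X⟧ := negLoopSeries m (m + 3) * (negLoopSeries m (m + 1))⁻¹

lemma ratioSeries_mul_negLoopSeries (m : ℕ) :
    ratioSeries m * negLoopSeries m (m + 1) = negLoopSeries m (m + 3) := by
  rw [ratioSeries, mul_assoc,
    PowerSeries.inv_mul_cancel _ (by simp [constantCoeff_negLoopSeries]), mul_one]

lemma coeff_zero_ratioSeries (m : ℕ) : coeff 0 (ratioSeries m) = 1 := by
  simp [ratioSeries, constantCoeff_negLoopSeries]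

lemma sub_one_mul_prod_rescale_ratioSeries (m : ℕ) :
    (ratioSeries m - 1) * ∏ i : Fin m, rescale ((qq ^ 2)⁻¹ ^ ((i : ℕ) + 1)) (ratioSeries m)
      = C ((-1) ^ (m + 1) * qq) * X := by
  set A := negLoopSeries m (m + 1)
  set A' := rescale ((qq ^ 2)⁻¹ ^ m) A
  have hA' : A' ≠ 0 := fun h => by
    simpa [A', A, constantCoeff_negLoopSeries] using congrArg (coeff 0) h
  have telescope :
      (∏ i : Fin m, rescale ((qq ^ 2)⁻¹ ^ ((i : ℕ) + 1)) (ratioSeries m)) * A' = A := by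
    rw [Fin.prod_univ_eq_prod_range (fun i => rescale ((qq ^ 2)⁻¹ ^ (i + 1)) (ratioSeries m))]
    refine prod_range_rescale_mul_rescale_eq (mul_inv_cancel₀ (pow_ne_zero 2 qq_ne_zero)) ?_ m
    rw [ratioSeries_mul_negLoopSeries, rescale_negLoopSeries]
  apply mul_right_cancel₀ hA'
  calc _ = ratioSeries m * A - A := by rw [mul_assoc, telescope, sub_mul, one_mul]
    _ = C ((-1) ^ (m + 1) * qq) * X * A' := by
      rw [ratioSeries_mul_negLoopSeries, negLoopSeries_functional_equation, add_sub_cancel_left]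

lemma coeff_prod_rescale_qq_pow (m : ℕ) (Y : K⟦X⟧) (b : ℕ) :
    coeff b (∏ i : Fin m, rescale ((qq ^ 2)⁻¹ ^ ((i : ℕ) + 1)) Y)
      = ∑ k ∈ Finset.Nat.antidiagonalTuple m b,
          ∏ i : Fin m, qq ^ (-2 * ((i : ℕ) + 1 : ℤ) * (k i : ℤ)) * coeff (k i) Y := by
  simp only [coeff_prod_fin, coeff_rescale, ← zpow_natCast, ← zpow_neg_one, ← zpow_mul]
  push_cast
  ring_nf

/-- **Coefficient recursion (A.5) for the `(−m)`-loop ratio series:** with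
`A = P_{−m}(q^{m+1}x)`, `B = P_{−m}(q^{m+3}x)` and `Y = B·A⁻¹ = Σ Yₙ xⁿ`, one has
`Y₀ = 1`, `Y₁ = (−1)^{m+1} q`, and for `n ≥ 2`
`Yₙ = −Σ_{a+b=n, a,b≥1} Yₐ Σ_{k₁+⋯+k_m=b} ∏ᵢ q^{−2ikᵢ} Y_{kᵢ}`. -/
theorem statement17 (m : ℕ) :
    letI A : PowerSeries K := PowerSeries.mk fun d : ℕ =>
      (-qq) ^ (-(m : ℤ) * (d : ℤ) ^ 2) * qq ^ ((m + 1) * d) / qPoch (qq ^ 2) d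
    letI B : PowerSeries K := PowerSeries.mk fun d : ℕ =>
      (-qq) ^ (-(m : ℤ) * (d : ℤ) ^ 2) * qq ^ ((m + 3) * d) / qPoch (qq ^ 2) d
    letI Y : PowerSeries K := B * A⁻¹
    PowerSeries.coeff 0 Y = 1 ∧
    PowerSeries.coeff 1 Y = (-1) ^ (m + 1) * qq ∧
    ∀ n : ℕ, 2 ≤ n →
      PowerSeries.coeff n Y =
        -∑ p ∈ (Finset.HasAntidiagonal.antidiagonal n).filter (fun p => 1 ≤ p.1 ∧ 1 ≤ p.2),
          PowerSeries.coeff p.1 Y *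
            ∑ k ∈ Finset.Nat.antidiagonalTuple m p.2,
              ∏ i : Fin m,
                qq ^ (-2 * ((i : ℕ) + 1 : ℤ) * (k i : ℤ)) * PowerSeries.coeff (k i) Y := by
  have hZ0 : coeff 0 (∏ i : Fin m, rescale ((qq ^ 2)⁻¹ ^ ((i : ℕ) + 1)) (ratioSeries m)) = 1 := by
    rw [coeff_prod_rescale_qq_pow]
    simp [Finset.Nat.antidiagonalTuple_zero_right, coeff_zero_ratioSeries]
  obtain ⟨hY1, recursion⟩ := coeff_of_sub_one_mul_eq_C_mul_X (coeff_zero_ratioSeries m) hZ0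
    (sub_one_mul_prod_rescale_ratioSeries m)
  refine ⟨coeff_zero_ratioSeries m, hY1, fun n hn => (recursion n hn).trans ?_⟩
  simp only [coeff_prod_rescale_qq_pow]
  rfl
end
end
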